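/- arXiv:2508.15674 — 3 statements merged into one kernel-verified Lean document; each statement's English description precedes it below -/
import Mathlib

section
/- Let K be a symmetric positive semi-definite t×t real matrix and σ > 0. Then every eigenvalue λ' of the matrix (σ²(K+σ²I)⁻¹ + I)⁻¹(K+σ²I) satisfies λ' = λ + σ⁴/(λ + 2σ²) > λ where λ is the corresponding eigenvalue of K; in particular, for every vector v ≠ 0, vᵀKv < vᵀ(σ²(K+σ²I)⁻¹ + I)⁻¹(K+σ²I)v. -/
open Matrix

lemma smul_one_posDef {n : ℕ} {c : ℝ} (hc : 0 < c) :
    ((c • 1 : Matrix (Fin n) (Fin n) ℝ)).PosDef := by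
  refine Matrix.PosDef.of_dotProduct_mulVec_pos ?_ (fun x hx => ?_)
  · unfold Matrix.IsHermitian
    simp
  · have h1 : (c • (1 : Matrix (Fin n) (Fin n) ℝ)) *ᵥ x = c • x := by
      simp [smul_mulVec]
    rw [h1]
    simp only [dotProduct_smul, smul_eq_mul, star_trivial]
    have hxx : 0 < x ⬝ᵥ x := by
      rcases lt_or_eq_of_le (by simpa using dotProduct_self_star_nonneg x) with h | h
      · exact h
      · exact absurd (dotProduct_self_eq_zero.mp h.symm) hx
    positivity

theorem eigenvalue_shift (t : ℕ) (K : Matrix (Fin t) (Fin t) ℝ) (σ : ℝ)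
    (hK : K.PosSemidef) (hσ : 0 < σ) :
    (∀ (lam : ℝ) (v : Fin t → ℝ), v ≠ 0 → K.mulVec v = lam • v →
      ((σ ^ 2 • (K + σ ^ 2 • 1)⁻¹ + 1)⁻¹ * (K + σ ^ 2 • 1)).mulVec v =
          (lam + σ ^ 4 / (lam + 2 * σ ^ 2)) • v ∧
      lam < lam + σ ^ 4 / (lam + 2 * σ ^ 2)) ∧
    (∀ v : Fin t → ℝ, v ≠ 0 →
      v ⬝ᵥ K.mulVec v <
        v ⬝ᵥ ((σ ^ 2 • (K + σ ^ 2 • 1)⁻¹ + 1)⁻¹ * (K + σ ^ 2 • 1)).mulVec v) := by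
  set A := K + σ ^ 2 • (1 : Matrix (Fin t) (Fin t) ℝ) with hAdef
  set B := K + (2 * σ ^ 2) • (1 : Matrix (Fin t) (Fin t) ℝ) with hBdef
  have hA : A.PosDef := Matrix.PosDef.posSemidef_add hK (smul_one_posDef (by positivity))
  have hB : B.PosDef := Matrix.PosDef.posSemidef_add hK (smul_one_posDef (by positivity))
  have hAd : IsUnit A.det := hA.det_pos.ne'.isUnit
  have hBd : IsUnit B.det := hB.det_pos.ne'.isUnit
  -- B = A + σ² • 1
  have hBA : B = A + σ ^ 2 • 1 := by
    rw [hAdef, hBdef]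
    module
  -- σ² • A⁻¹ + 1 = A⁻¹ * B
  have h1 : σ ^ 2 • A⁻¹ + 1 = A⁻¹ * B := by
    rw [hBA, mul_add, Matrix.nonsing_inv_mul _ hAd, Matrix.mul_smul, mul_one, add_comm]
  -- A * A = B * K + σ⁴ • 1
  have hAA : A * A = B * K + σ ^ 4 • 1 := by
    rw [hAdef, hBdef]
    simp only [add_mul, mul_add, Matrix.smul_mul, Matrix.mul_smul, one_mul, mul_one,
      smul_smul]
    module
  -- key identity
  have key : (σ ^ 2 • A⁻¹ + 1)⁻¹ * A = K + σ ^ 4 • B⁻¹ := by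
    rw [h1, Matrix.mul_inv_rev, Matrix.nonsing_inv_nonsing_inv _ hAd, Matrix.mul_assoc, hAA,
      mul_add, ← Matrix.mul_assoc, Matrix.nonsing_inv_mul _ hBd, one_mul, Matrix.mul_smul,
      mul_one]
  rw [key]
  have hBinv : B⁻¹.PosDef := hB.inv
  constructor
  · intro lam v hv hKv
    have hvv : 0 < v ⬝ᵥ v := by
      rcases lt_or_eq_of_le (by simpa using dotProduct_self_star_nonneg v) with h | h
      · exact h
      · exact absurd (dotProduct_self_eq_zero.mp h.symm) hv
    have hlam : 0 ≤ lam := by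
      have h0 := hK.dotProduct_mulVec_nonneg v
      rw [hKv] at h0
      simp only [dotProduct_smul, smul_eq_mul, star_trivial] at h0
      nlinarith
    have hden : 0 < lam + 2 * σ ^ 2 := by positivity
    have hBv : B *ᵥ v = (lam + 2 * σ ^ 2) • v := by
      rw [hBdef, add_mulVec, hKv, smul_mulVec, one_mulVec]
      module
    have hBinvv : B⁻¹ *ᵥ v = (lam + 2 * σ ^ 2)⁻¹ • v := by
      have h2 : B⁻¹ *ᵥ (B *ᵥ v) = v := by
        rw [mulVec_mulVec, Matrix.nonsing_inv_mul _ hBd, one_mulVec]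
      rw [hBv, mulVec_smul] at h2
      have h3 := congrArg (fun w => (lam + 2 * σ ^ 2)⁻¹ • w) h2
      simpa [smul_smul, inv_mul_cancel₀ hden.ne'] using h3
    constructor
    · rw [add_mulVec, hKv, smul_mulVec, hBinvv, smul_smul, add_smul]
      congr 1
    · have : 0 < σ ^ 4 / (lam + 2 * σ ^ 2) := by positivity
      linarith
  · intro v hv
    rw [add_mulVec, dotProduct_add, smul_mulVec, dotProduct_smul, smul_eq_mul]
    have hpos : 0 < v ⬝ᵥ B⁻¹ *ᵥ v := by simpa using hBinv.dotProduct_mulVec_pos hv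
    have : 0 < σ ^ 4 * (v ⬝ᵥ B⁻¹ *ᵥ v) := by positivity
    linarith
end

section
/- Let K be a symmetric positive semi-definite t×t matrix, k ∈ ℝᵗ, σ > 0, and suppose the (t+1)×(t+1) block matrix [[K, k],[kᵀ, 1]] is positive semi-definite. Define h = (K+σ²I)⁻¹k and σ̄² = 1 − kᵀ(K+σ²I)⁻¹k. Then σ̄² ≥ σ²·‖h‖², i.e., the posterior standard deviation satisfies σ̄ ≥ σ·‖h‖. -/
open Matrix

theorem posterior_std_lower_bound (t : ℕ) (K : Matrix (Fin t) (Fin t) ℝ)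
    (k : Fin t → ℝ) (σ : ℝ) (hK : K.PosSemidef) (hσ : 0 < σ)
    (hblock : (Matrix.fromBlocks K (Matrix.of fun i (_ : Fin 1) => k i)
        (Matrix.of fun (_ : Fin 1) j => k j) 1).PosSemidef) :
    1 - k ⬝ᵥ (K + σ ^ 2 • 1)⁻¹.mulVec k ≥
        σ ^ 2 * ∑ i, ((K + σ ^ 2 • 1)⁻¹.mulVec k i) ^ 2 ∧
    Real.sqrt (1 - k ⬝ᵥ (K + σ ^ 2 • 1)⁻¹.mulVec k) ≥
        σ * Real.sqrt (∑ i, ((K + σ ^ 2 • 1)⁻¹.mulVec k i) ^ 2) := by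
  set A : Matrix (Fin t) (Fin t) ℝ := K + σ ^ 2 • 1 with hA_def
  have hsmul : ((σ ^ 2 • 1 : Matrix (Fin t) (Fin t) ℝ)).PosDef := by
    rw [Matrix.smul_one_eq_diagonal]
    exact posDef_diagonal_iff.mpr fun i => by positivity
  have hA : A.PosDef := Matrix.PosDef.posSemidef_add hK hsmul
  set h : Fin t → ℝ := A⁻¹.mulVec k with hh_def
  have hAh : A.mulVec h = k := by
    rw [hh_def, mulVec_mulVec, Matrix.mul_nonsing_inv _ hA.det_pos.ne'.isUnit, one_mulVec]
  have keq : k ⬝ᵥ h = h ⬝ᵥ K.mulVec h + σ ^ 2 * (h ⬝ᵥ h) := by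
    rw [← hAh, hA_def, add_mulVec, smul_mulVec, one_mulVec, add_dotProduct,
      smul_dotProduct, dotProduct_comm (K.mulVec h) h, smul_eq_mul]
  have hB : (Matrix.of fun i (_ : Fin 1) => k i).mulVec (fun _ => (1:ℝ)) = k := by
    funext i; simp [mulVec, dotProduct]
  have hC : (Matrix.of fun (_ : Fin 1) j => k j).mulVec (-h) = fun _ => -(k ⬝ᵥ h) := by
    funext j; simp [mulVec, dotProduct, Finset.sum_neg_distrib, mul_comm]
  have qK : h ⬝ᵥ K.mulVec h - 2 * (k ⬝ᵥ h) + 1 ≥ 0 := by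
    have hq := hblock.dotProduct_mulVec_nonneg (Sum.elim (-h) (fun _ => 1))
    rw [show (star (Sum.elim (-h) (fun _ : Fin 1 => (1:ℝ)))) =
        Sum.elim (-h) (fun _ : Fin 1 => (1:ℝ)) by
      funext i; cases i <;> simp] at hq
    rw [fromBlocks_mulVec, Sum.elim_comp_inl, Sum.elim_comp_inr, hB, hC,
      sumElim_dotProduct_sumElim, mulVec_neg, one_mulVec] at hq
    simp only [dotProduct_add, neg_dotProduct, dotProduct_neg, dotProduct,
      Fin.sum_univ_one, Pi.neg_apply, Pi.add_apply, neg_neg] at hq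
    have hkh : (∑ i, -h i * k i) = -(k ⬝ᵥ h) := by
      simp [dotProduct, Finset.sum_neg_distrib, mul_comm]
    have hhkh : (∑ i, h i * (K.mulVec h) i) = h ⬝ᵥ K.mulVec h := rfl
    have expand : ∑ x : Fin t, -h x * (-(K *ᵥ h) x + k x)
        = (∑ i, h i * (K *ᵥ h) i) + ∑ i, -h i * k i := by
      rw [← Finset.sum_add_distrib]
      exact Finset.sum_congr rfl fun i _ => by ring
    rw [expand, hkh, hhkh] at hq
    have : (∑ i : Fin t, k i * h i) = k ⬝ᵥ h := rfl
    rw [this] at hq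
    linarith
  have hS : (h ⬝ᵥ h) = ∑ i, (h i) ^ 2 := by
    simp [dotProduct, sq]
  have main : 1 - k ⬝ᵥ h ≥ σ ^ 2 * ∑ i, (h i) ^ 2 := by
    rw [← hS]; nlinarith [qK, keq]
  refine ⟨main, ?_⟩
  have hSnn : (0:ℝ) ≤ ∑ i, (h i) ^ 2 := by positivity
  have : σ * Real.sqrt (∑ i, (h i) ^ 2) = Real.sqrt (σ ^ 2 * ∑ i, (h i) ^ 2) := by
    rw [Real.sqrt_mul (by positivity), Real.sqrt_sq hσ.le]
  rw [this]
  exact Real.sqrt_le_sqrt main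
end

section
/- Let ξ, f, μ ∈ ℝ, s > 0 and w > 1. Define I = max{ξ − f, 0} and EI = (ξ−μ)·Φ((ξ−μ)/s) + s·φ((ξ−μ)/s). If f − μ < s·w, then I − EI > −s·w − s·0.4·exp(−0.2·w²). -/
noncomputable def normPdf (z : ℝ) : ℝ := (Real.sqrt (2 * Real.pi))⁻¹ * Real.exp (-z ^ 2 / 2)

noncomputable def normCdf (z : ℝ) : ℝ := ∫ u in Set.Iic z, normPdf u

lemma sqrt_two_pi_gt : (2.5 : ℝ) < Real.sqrt (2 * Real.pi) := by
  have h : (2.5 : ℝ)^2 < 2 * Real.pi := by nlinarith [Real.pi_gt_d6]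
  nlinarith [Real.sq_sqrt (by positivity : (0:ℝ) ≤ 2 * Real.pi),
    Real.sqrt_nonneg (2 * Real.pi)]

lemma normPdf_nonneg (z : ℝ) : 0 ≤ normPdf z := by
  unfold normPdf; positivity

lemma normPdf_lt (z : ℝ) : normPdf z < 0.4 * Real.exp (-0.2 * z ^ 2) := by
  unfold normPdf
  have h1 : Real.exp (-z ^ 2 / 2) ≤ Real.exp (-0.2 * z ^ 2) := by
    apply Real.exp_le_exp.mpr; nlinarith [sq_nonneg z]
  have h2 : (Real.sqrt (2 * Real.pi))⁻¹ < 0.4 := by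
    rw [inv_lt_comm₀ (by linarith [sqrt_two_pi_gt]) (by norm_num)]
    linarith [sqrt_two_pi_gt]
  have h3 : 0 < Real.exp (-z ^ 2 / 2) := Real.exp_pos _
  nlinarith [Real.exp_pos (-0.2 * z ^ 2)]

lemma normPdf_integrable : MeasureTheory.Integrable normPdf := by
  have := (integrable_exp_neg_mul_sq (by norm_num : (0:ℝ) < 1/2)).const_mul
    (Real.sqrt (2 * Real.pi))⁻¹
  convert this using 2 with x
  unfold normPdf
  ring_nf

lemma normCdf_nonneg (z : ℝ) : 0 ≤ normCdf z := by
  apply MeasureTheory.setIntegral_nonneg measurableSet_Iic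
  intro x _; exact normPdf_nonneg x

lemma normCdf_le_one (z : ℝ) : normCdf z ≤ 1 := by
  have h1 : normCdf z ≤ ∫ u, normPdf u :=
    MeasureTheory.setIntegral_le_integral normPdf_integrable
      (Filter.Eventually.of_forall normPdf_nonneg)
  have h2 : ∫ u, normPdf u = 1 := by
    have h3 : ∫ u, normPdf u = (Real.sqrt (2 * Real.pi))⁻¹ * ∫ u, Real.exp (-(1/2) * u ^ 2) := by
      rw [← MeasureTheory.integral_const_mul]
      congr 1 with x
      unfold normPdf; ring_nf
    rw [h3, integral_gaussian]
    have h4 : Real.pi / (1/2) = 2 * Real.pi := by ring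
    rw [h4]
    have h5 : Real.sqrt (2 * Real.pi) ≠ 0 := by positivity
    field_simp
  linarith [h1, h2.le]

lemma normPdf_hasDerivAt (t : ℝ) :
    HasDerivAt normPdf ((Real.sqrt (2 * Real.pi))⁻¹ * Real.exp (-t ^ 2 / 2) * (-t)) t := by
  have h1 : HasDerivAt (fun x : ℝ => -x ^ 2 / 2) (-t) t := by
    have h := ((hasDerivAt_pow 2 t).neg.div_const 2)
    refine h.congr_deriv ?_
    push_cast; ring
  have h2 := (h1.exp).const_mul (Real.sqrt (2 * Real.pi))⁻¹
  have h3 : HasDerivAt (fun x => (Real.sqrt (2 * Real.pi))⁻¹ * Real.exp (-x ^ 2 / 2))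
      ((Real.sqrt (2 * Real.pi))⁻¹ * Real.exp (-t ^ 2 / 2) * (-t)) t := by
    refine h2.congr_deriv ?_; ring
  exact h3

lemma normPdf_lipschitz (a b : ℝ) : normPdf a - normPdf b ≤ |b - a| := by
  have key : ∀ x : ℝ, ‖(Real.sqrt (2 * Real.pi))⁻¹ * Real.exp (-x ^ 2 / 2) * (-x)‖ ≤ 1 := by
    intro x
    have hc : (Real.sqrt (2 * Real.pi))⁻¹ ≤ 1 := by
      rw [inv_le_one_iff₀]; right; linarith [sqrt_two_pi_gt]
    have he : |x| * Real.exp (-x ^ 2 / 2) ≤ 1 := by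
      have h2 : |x| ≤ Real.exp (x ^ 2 / 2) := by
        nlinarith [Real.add_one_le_exp (x ^ 2 / 2), abs_nonneg x, sq_abs x]
      calc |x| * Real.exp (-x ^ 2 / 2) ≤ Real.exp (x ^ 2 / 2) * Real.exp (-x ^ 2 / 2) :=
            mul_le_mul_of_nonneg_right h2 (Real.exp_pos _).le
        _ = 1 := by rw [← Real.exp_add, (by ring : x ^ 2 / 2 + -x ^ 2 / 2 = 0), Real.exp_zero]
    rw [norm_mul, norm_mul, Real.norm_eq_abs, Real.norm_eq_abs, Real.norm_eq_abs,
      abs_neg, abs_of_nonneg (by positivity : (0:ℝ) ≤ (Real.sqrt (2 * Real.pi))⁻¹),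
      abs_of_nonneg (Real.exp_pos (-x ^ 2 / 2)).le]
    calc (Real.sqrt (2 * Real.pi))⁻¹ * Real.exp (-x ^ 2 / 2) * |x|
        ≤ 1 * (Real.exp (-x ^ 2 / 2) * |x|) := by
          rw [mul_assoc]
          exact mul_le_mul_of_nonneg_right hc (by positivity)
      _ ≤ 1 := by rw [one_mul, mul_comm]; exact he
  have h := Convex.norm_image_sub_le_of_norm_hasDerivWithin_le
    (f := normPdf) (f' := fun x => (Real.sqrt (2 * Real.pi))⁻¹ * Real.exp (-x ^ 2 / 2) * (-x))
    (s := Set.univ) (x := b) (y := a) (C := 1)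
    (fun x _ => (normPdf_hasDerivAt x).hasDerivWithinAt)
    (fun x _ => key x) convex_univ trivial trivial
  rw [one_mul] at h
  calc normPdf a - normPdf b ≤ |normPdf a - normPdf b| := le_abs_self _
    _ ≤ |a - b| := h
    _ = |b - a| := abs_sub_comm a b

theorem improvement_minus_EI_lower (ξ f μ s w : ℝ) (hs : 0 < s) (hw : 1 < w)
    (hfμ : f - μ < s * w) :
    max (ξ - f) 0 - ((ξ - μ) * normCdf ((ξ - μ) / s) + s * normPdf ((ξ - μ) / s)) >
      -(s * w) - s * 0.4 * Real.exp (-0.2 * w ^ 2) := by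
  set z := (ξ - μ) / s with hz
  have hsz : ξ - μ = s * z := by rw [hz]; field_simp
  have hΦ0 := normCdf_nonneg z
  have hΦ1 := normCdf_le_one z
  have hφ0 := normPdf_nonneg z
  have hφlt := normPdf_lt z
  have hexpw : (0:ℝ) < Real.exp (-0.2 * w ^ 2) := Real.exp_pos _
  rcases le_or_gt w z with hcase | hcase
  · -- z ≥ w : ξ - f > 0
    have hzpos : 0 < z := lt_of_lt_of_le (by linarith) hcase
    have hξf : 0 < ξ - f := by nlinarith
    rw [max_eq_left hξf.le]
    have hξμ : 0 ≤ ξ - μ := by nlinarith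
    have h1 : (ξ - μ) * normCdf z ≤ ξ - μ := by
      have := mul_le_mul_of_nonneg_left hΦ1 hξμ
      simpa using this
    have hφz : normPdf z < 0.4 * Real.exp (-0.2 * w ^ 2) := by
      calc normPdf z < 0.4 * Real.exp (-0.2 * z ^ 2) := hφlt
        _ ≤ 0.4 * Real.exp (-0.2 * w ^ 2) := by
            have h6 : Real.exp (-0.2 * z ^ 2) ≤ Real.exp (-0.2 * w ^ 2) := by
              apply Real.exp_le_exp.mpr; nlinarith
            linarith
    nlinarith
  · -- z < w
    have hub : (ξ - μ) * normCdf z + s * normPdf z < s * w + s * 0.4 * Real.exp (-0.2 * w ^ 2) := by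
      rcases le_or_gt z 0 with hz0 | hz0
      · have h1 : (ξ - μ) * normCdf z ≤ 0 := by
          nlinarith [mul_nonneg (by nlinarith : (0:ℝ) ≤ μ - ξ) hΦ0]
        have h2 : normPdf z < 0.4 := by
          have h7 : Real.exp (-0.2 * z ^ 2) ≤ 1 := by
            rw [Real.exp_le_one_iff]; nlinarith
          nlinarith
        nlinarith
      · have hξμ : 0 ≤ ξ - μ := by nlinarith
        have h1 : (ξ - μ) * normCdf z ≤ s * z := by
          have := mul_le_mul_of_nonneg_left hΦ1 hξμ
          simp at this; linarith
        have hlip := normPdf_lipschitz z w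
        rw [abs_of_pos (by linarith : (0:ℝ) < w - z)] at hlip
        have hφw := normPdf_lt w
        nlinarith
    have hmax : max (ξ - f) 0 ≥ 0 := le_max_right _ _
    nlinarith
end
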